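/- Let d ≥ 2 and let g : ℕ → GL(d,ℝ) have bounded steps; for each n ∈ ℕ fix a singular value decomposition g(n) = k(n)·diag(α(n))·k'(n). Then there exists C > 0 such that for all n ≤ m in ℕ: sin∠( k(n)·e₁ , k(m)·e₁ ) ≤ C · Σ_{j=n}^{m−1} ( α(j) 1 / α(j) 0 ). In particular, if the series Σ_j α(j) 1/α(j) 0 converges, then for every ε > 0 there is N such that sin∠(k(n)·e₁, k(m)·e₁) < ε for all m ≥ n ≥ N. -/

import Mathlib

open Matrix

/-- The operator norm of a `d × d` real matrix acting on Euclidean `ℝ^d`. -/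
noncomputable def opNorm {d : ℕ} (M : Matrix (Fin d) (Fin d) ℝ) : ℝ :=
  ‖LinearMap.toContinuousLinearMap (Matrix.toEuclideanLin M)‖

/-- The action of a `d × d` real matrix on Euclidean `ℝ^d`. -/
noncomputable def appE {d : ℕ} (M : Matrix (Fin d) (Fin d) ℝ)
    (v : EuclideanSpace ℝ (Fin d)) : EuclideanSpace ℝ (Fin d) :=
  Matrix.toEuclideanLin M v

/-- `IsSVD g k α k'` means `g = k · diag(α) · k'` is a singular value decomposition:
`k, k'` are orthogonal and `α` is positive and nonincreasing. -/
def IsSVD {d : ℕ} (g k : Matrix (Fin d) (Fin d) ℝ) (α : Fin d → ℝ)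
    (k' : Matrix (Fin d) (Fin d) ℝ) : Prop :=
  k * kᵀ = 1 ∧ k' * k'ᵀ = 1 ∧ (∀ i, 0 < α i) ∧ Antitone α ∧
    g = k * Matrix.diagonal α * k'

/-- A sequence of matrices has bounded steps if consecutive quotients are uniformly
bounded (in operator norm) together with their inverses. -/
noncomputable def HasBoundedSteps {d : ℕ} (g : ℕ → Matrix (Fin d) (Fin d) ℝ) : Prop :=
  ∃ r₀ : ℝ, 1 ≤ r₀ ∧ ∀ n : ℕ,
    opNorm ((g n)⁻¹ * g (n + 1)) ≤ r₀ ∧ opNorm ((g (n + 1))⁻¹ * g n) ≤ r₀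

/-- The sine of the angle between two vectors of Euclidean `ℝ^d`. -/
noncomputable def sinAngle {d : ℕ} (u v : EuclideanSpace ℝ (Fin d)) : ℝ :=
  Real.sin (InnerProductGeometry.angle u v)

/-- The first standard basis vector of Euclidean `ℝ^d`. -/
noncomputable def e1 {d : ℕ} (h : 0 < d) : EuclideanSpace ℝ (Fin d) :=
  EuclideanSpace.single ⟨0, h⟩ 1

/-!
Write `u j = k(j) e₁`. For one step, `w = g(j)⁻¹ g(j+1) k'(j+1)ᵀ e₁` has `‖w‖ ≤ r₀` and
`g(j) w = α(j+1)₀ u(j+1)`. Dropping the top singular value shows that the component of `g(j) w`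
orthogonal to `u j` has norm at most `α(j)₁ ‖w‖`, so `α(j+1)₀ sin∠(u j, u(j+1)) ≤ α(j)₁ r₀`;
together with `α(j)₀ = ‖g(j)‖ ≤ r₀ α(j+1)₀` this is `sin∠(u j, u(j+1)) ≤ r₀² α(j)₁ / α(j)₀`.
Up to a factor `√2`, the sine of the angle agrees with `min ‖u - v‖ ‖u + v‖`, which satisfies the
triangle inequality, so the one-step bounds add up along `[n, m)` with `C = √2 r₀²`.
-/

open RealInnerProductSpace InnerProductGeometry
open scoped Matrix.Norms.L2Operator

theorem sin_angle_mul_norm_le_norm_sub_smul {V : Type*} [NormedAddCommGroup V]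
    [InnerProductSpace ℝ V] (x v : V) (t : ℝ) :
    Real.sin (angle x v) * ‖x‖ ≤ ‖x - t • v‖ := by
  have hcos := cos_angle_mul_norm_mul_norm x v
  have hsq : ‖x - t • v‖ ^ 2 - (Real.sin (angle x v) * ‖x‖) ^ 2
      = (t * ‖v‖ - Real.cos (angle x v) * ‖x‖) ^ 2 := by
    rw [norm_sub_sq_real, real_inner_smul_right, norm_smul, Real.norm_eq_abs, mul_pow, sq_abs,
      ← hcos]
    linear_combination -‖x‖ ^ 2 * Real.sin_sq_add_cos_sq (angle x v)
  exact (pow_le_pow_iff_left₀ (mul_nonneg (sin_angle_nonneg x v) (norm_nonneg x))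
    (norm_nonneg _) two_ne_zero).1 (sub_nonneg.1 (hsq ▸ sq_nonneg _))

section EuclideanAction

variable {d : ℕ}

theorem opNorm_eq_norm (M : Matrix (Fin d) (Fin d) ℝ) : opNorm M = ‖M‖ := rfl

theorem appE_mul (A B : Matrix (Fin d) (Fin d) ℝ) (v : EuclideanSpace ℝ (Fin d)) :
    appE (A * B) v = appE A (appE B v) := by
  change toEuclideanCLM (𝕜 := ℝ) (A * B) v = _
  rw [map_mul]
  rfl

theorem norm_appE_le (M : Matrix (Fin d) (Fin d) ℝ) (v : EuclideanSpace ℝ (Fin d)) :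
    ‖appE M v‖ ≤ opNorm M * ‖v‖ :=
  (toEuclideanCLM (𝕜 := ℝ) M).le_opNorm v

theorem norm_appE_of_mem_unitary {A : Matrix (Fin d) (Fin d) ℝ} (hA : A ∈ unitary _)
    (v : EuclideanSpace ℝ (Fin d)) : ‖appE A v‖ = ‖v‖ :=
  ContinuousLinearMap.norm_map_of_mem_unitary
    (Unitary.map_mem (toEuclideanCLM (n := Fin d) (𝕜 := ℝ)) hA) v

theorem transpose_mem_unitary {A : Matrix (Fin d) (Fin d) ℝ} (hA : A ∈ unitary _) :
    Aᵀ ∈ unitary (Matrix (Fin d) (Fin d) ℝ) := by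
  simpa [star_eq_conjTranspose] using Unitary.star_mem hA

theorem norm_e1 (h0 : 0 < d) : ‖e1 h0‖ = 1 := by
  simp [e1]

theorem appE_diagonal_e1 (h0 : 0 < d) (α : Fin d → ℝ) :
    appE (diagonal α) (e1 h0) = α ⟨0, h0⟩ • e1 h0 := by
  ext i
  by_cases hi : i = ⟨0, h0⟩ <;> simp [appE, e1, hi]

theorem pi_norm_eq_of_antitone (h0 : 0 < d) {α : Fin d → ℝ} (hα : 0 ≤ α) (hanti : Antitone α) :
    ‖α‖ = α ⟨0, h0⟩ := by
  refine le_antisymm ((pi_norm_le_iff_of_nonneg (hα _)).2 fun i => ?_) ?_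
  · rw [Real.norm_of_nonneg (hα i)]
    exact hanti (Fin.mk_le_mk.2 (Nat.zero_le _))
  · simpa [Real.norm_of_nonneg (hα _)] using norm_le_pi_norm α ⟨0, h0⟩

end EuclideanAction

namespace IsSVD

variable {d : ℕ} {g k k' : Matrix (Fin d) (Fin d) ℝ} {α : Fin d → ℝ}

theorem left_mem_unitary (h : IsSVD g k α k') : k ∈ unitary (Matrix (Fin d) (Fin d) ℝ) :=
  (mem_orthogonalGroup_iff _ _).2 h.1

theorem right_mem_unitary (h : IsSVD g k α k') : k' ∈ unitary (Matrix (Fin d) (Fin d) ℝ) :=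
  (mem_orthogonalGroup_iff _ _).2 h.2.1

theorem pos (h : IsSVD g k α k') (i : Fin d) : 0 < α i := h.2.2.1 i

theorem antitone (h : IsSVD g k α k') : Antitone α := h.2.2.2.1

theorem eq_mul (h : IsSVD g k α k') : g = k * diagonal α * k' := h.2.2.2.2

theorem isUnit_det (h : IsSVD g k α k') : IsUnit g.det := by
  obtain ⟨hk, hk', hα, -, rfl⟩ := h
  rw [det_mul, det_mul, det_diagonal]
  exact ((isUnit_det_of_right_inverse hk).mul
    (IsUnit.mk0 _ (Finset.prod_ne_zero_iff.2 fun i _ => (hα i).ne'))).mul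
    (isUnit_det_of_right_inverse hk')

theorem opNorm_eq (h0 : 0 < d) (h : IsSVD g k α k') : opNorm g = α ⟨0, h0⟩ := by
  rw [opNorm_eq_norm, h.eq_mul, CStarRing.norm_mul_mem_unitary _ h.right_mem_unitary,
    CStarRing.norm_mem_unitary_mul _ h.left_mem_unitary, l2_opNorm_diagonal,
    pi_norm_eq_of_antitone h0 (fun i => (h.pos i).le) h.antitone]

theorem appE_transpose_e1 (h0 : 0 < d) (h : IsSVD g k α k') :
    appE g (appE k'ᵀ (e1 h0)) = α ⟨0, h0⟩ • appE k (e1 h0) := by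
  have hgk' : g * k'ᵀ = k * diagonal α := by
    rw [h.eq_mul, Matrix.mul_assoc, h.2.1, Matrix.mul_one]
  rw [← appE_mul, hgk', appE_mul, appE_diagonal_e1]
  exact (toEuclideanLin k).map_smul _ _

theorem sinAngle_mul_norm_le (h1 : 1 < d) (h : IsSVD g k α k') (w : EuclideanSpace ℝ (Fin d)) :
    sinAngle (appE g w) (appE k (e1 (Nat.zero_lt_of_lt h1))) * ‖appE g w‖
      ≤ α ⟨1, h1⟩ * ‖w‖ := by
  have h0 : 0 < d := Nat.zero_lt_of_lt h1
  set c := appE k' w with hc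
  set γ := Function.update α ⟨0, h0⟩ 0
  have hγ : ‖γ‖ ≤ α ⟨1, h1⟩ := by
    refine (pi_norm_le_iff_of_nonneg (h.pos _).le).2 fun i => ?_
    by_cases hi : i = ⟨0, h0⟩
    · simpa [γ, hi] using (h.pos _).le
    · have h1i : (⟨1, h1⟩ : Fin d) ≤ i :=
        Fin.mk_le_mk.2 (Nat.one_le_iff_ne_zero.2 fun hi0 => hi (Fin.ext hi0))
      simpa [γ, hi, abs_of_pos (h.pos i)] using h.antitone h1i
  -- removing the `k e₁`-component of `g w` replaces `α₀` by `0` in the diagonal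
  have hsplit : appE g w - (α ⟨0, h0⟩ * c ⟨0, h0⟩) • appE k (e1 h0)
      = appE k (appE (diagonal γ) c) := by
    rw [h.eq_mul, appE_mul, appE_mul, ← hc]
    unfold appE
    rw [← map_smul, ← map_sub]
    congr 1
    ext i
    by_cases hi : i = ⟨0, h0⟩ <;> simp [e1, γ, hi, mulVec_diagonal]
  calc sinAngle (appE g w) (appE k (e1 h0)) * ‖appE g w‖
      ≤ ‖appE g w - (α ⟨0, h0⟩ * c ⟨0, h0⟩) • appE k (e1 h0)‖ :=
        sin_angle_mul_norm_le_norm_sub_smul _ _ _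
    _ = ‖appE (diagonal γ) c‖ := by rw [hsplit, norm_appE_of_mem_unitary h.left_mem_unitary]
    _ ≤ ‖γ‖ * ‖c‖ := by simpa [opNorm_eq_norm] using norm_appE_le (diagonal γ) c
    _ ≤ α ⟨1, h1⟩ * ‖w‖ := by
        rw [norm_appE_of_mem_unitary h.right_mem_unitary]
        exact mul_le_mul_of_nonneg_right hγ (norm_nonneg w)

end IsSVD

theorem sinAngle_le_of_opNorm_le {d : ℕ} (h1 : 1 < d) {g g' k l k' l' : Matrix (Fin d) (Fin d) ℝ}
    {α β : Fin d → ℝ} (hg : IsSVD g k α k') (hg' : IsSVD g' l β l') {r : ℝ}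
    (hr : opNorm (g⁻¹ * g') ≤ r) (hr' : opNorm (g'⁻¹ * g) ≤ r) :
    sinAngle (appE k (e1 (Nat.zero_lt_of_lt h1))) (appE l (e1 (Nat.zero_lt_of_lt h1)))
      ≤ r ^ 2 * (α ⟨1, h1⟩ / α ⟨0, Nat.zero_lt_of_lt h1⟩) := by
  have h0 : 0 < d := Nat.zero_lt_of_lt h1
  have hα₀ : 0 < α ⟨0, h0⟩ := hg.pos _
  have hβ₀ : 0 < β ⟨0, h0⟩ := hg'.pos _
  set s := sinAngle (appE k (e1 h0)) (appE l (e1 h0))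
  set w := appE (g⁻¹ * g') (appE l'ᵀ (e1 h0))
  have hgw : appE g w = β ⟨0, h0⟩ • appE l (e1 h0) := by
    rw [← appE_mul, ← Matrix.mul_assoc, mul_nonsing_inv _ hg.isUnit_det, Matrix.one_mul]
    exact hg'.appE_transpose_e1 h0
  have hw : ‖w‖ ≤ r := by
    calc ‖w‖ ≤ opNorm (g⁻¹ * g') * ‖appE l'ᵀ (e1 h0)‖ := norm_appE_le _ _
      _ = opNorm (g⁻¹ * g') := by
        rw [norm_appE_of_mem_unitary (transpose_mem_unitary hg'.right_mem_unitary), norm_e1,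
          mul_one]
      _ ≤ r := hr
  have hsβ : s * β ⟨0, h0⟩ ≤ α ⟨1, h1⟩ * r := by
    have hsin := hg.sinAngle_mul_norm_le h1 w
    rw [hgw, norm_smul, norm_appE_of_mem_unitary hg'.left_mem_unitary, norm_e1, mul_one,
      Real.norm_of_nonneg hβ₀.le, sinAngle, angle_smul_left_of_pos _ _ hβ₀, angle_comm] at hsin
    exact hsin.trans (mul_le_mul_of_nonneg_left hw (hg.pos _).le)
  have hαβ : α ⟨0, h0⟩ ≤ β ⟨0, h0⟩ * r := by
    calc α ⟨0, h0⟩ = opNorm (g' * (g'⁻¹ * g)) := by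
          rw [← Matrix.mul_assoc, mul_nonsing_inv _ hg'.isUnit_det, Matrix.one_mul,
            hg.opNorm_eq h0]
      _ ≤ opNorm g' * opNorm (g'⁻¹ * g) := l2_opNorm_mul _ _
      _ ≤ β ⟨0, h0⟩ * r := by
        rw [hg'.opNorm_eq h0]
        exact mul_le_mul_of_nonneg_left hr' hβ₀.le
  have hs : 0 ≤ s := sin_angle_nonneg _ _
  have hr₀ : 0 ≤ r := (norm_nonneg (g⁻¹ * g')).trans hr
  rw [mul_div_assoc', le_div_iff₀ hα₀]
  calc s * α ⟨0, h0⟩ ≤ s * β ⟨0, h0⟩ * r := by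
        rw [mul_assoc]; exact mul_le_mul_of_nonneg_left hαβ hs
    _ ≤ α ⟨1, h1⟩ * r * r := mul_le_mul_of_nonneg_right hsβ hr₀
    _ = r ^ 2 * α ⟨1, h1⟩ := by ring

section ProjDist

variable {V : Type*} [SeminormedAddCommGroup V]

/-- On unit vectors, a distance between the lines they span; unlike `sin ∠` it visibly satisfies the
triangle inequality. -/
noncomputable def projDist (u v : V) : ℝ := min ‖u - v‖ ‖u + v‖

theorem projDist_nonneg (u v : V) : 0 ≤ projDist u v :=
  le_min (norm_nonneg _) (norm_nonneg _)

theorem projDist_self (u : V) : projDist u u = 0 := by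
  simp [projDist]

theorem projDist_triangle (u v w : V) : projDist u w ≤ projDist u v + projDist v w := by
  unfold projDist
  rcases min_cases ‖u - v‖ ‖u + v‖ with ⟨h₁, -⟩ | ⟨h₁, -⟩ <;>
  rcases min_cases ‖v - w‖ ‖v + w‖ with ⟨h₂, -⟩ | ⟨h₂, -⟩ <;> rw [h₁, h₂]
  · exact (min_le_left _ _).trans (norm_sub_le_norm_sub_add_norm_sub u v w)
  · refine (min_le_right _ _).trans ?_
    calc ‖u + w‖ = ‖(u - v) + (v + w)‖ := by abel_nf
      _ ≤ _ := norm_add_le _ _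
  · refine (min_le_right _ _).trans ?_
    calc ‖u + w‖ = ‖(u + v) - (v - w)‖ := by abel_nf
      _ ≤ _ := norm_sub_le _ _
  · refine (min_le_left _ _).trans ?_
    calc ‖u - w‖ = ‖(u + v) - (v + w)‖ := by abel_nf
      _ ≤ _ := norm_sub_le _ _

theorem projDist_le_sum_Ico (u : ℕ → V) {n m : ℕ} (h : n ≤ m) :
    projDist (u n) (u m) ≤ ∑ j ∈ Finset.Ico n m, projDist (u j) (u (j + 1)) := by
  induction m, h using Nat.le_induction with
  | base => simp [projDist_self]
  | succ m hnm ih =>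
    rw [Finset.sum_Ico_succ_top hnm]
    exact (projDist_triangle _ (u m) _).trans (by linarith)

end ProjDist

section ProjDistAngle

variable {V : Type*} [NormedAddCommGroup V] [InnerProductSpace ℝ V]

theorem sin_angle_le_projDist {u : V} (hu : ‖u‖ = 1) (v : V) :
    Real.sin (angle u v) ≤ projDist u v := by
  refine le_min ?_ ?_
  · simpa [hu] using sin_angle_mul_norm_le_norm_sub_smul u v 1
  · simpa [hu, angle_neg_right] using sin_angle_mul_norm_le_norm_sub_smul u (-v) 1

theorem projDist_le_sqrt_two_mul_sin_angle {u v : V} (hu : ‖u‖ = 1) (hv : ‖v‖ = 1) :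
    projDist u v ≤ √2 * Real.sin (angle u v) := by
  set θ := angle u v
  have hinner : ⟪u, v⟫ = Real.cos θ := by
    simpa [hu, hv] using (cos_angle_mul_norm_mul_norm u v).symm
  have hsq : (√2 * Real.sin θ) ^ 2 = 2 - 2 * Real.cos θ ^ 2 := by
    rw [mul_pow, Real.sq_sqrt zero_le_two, Real.sin_sq]
    ring
  refine (pow_le_pow_iff_left₀ (projDist_nonneg u v)
    (mul_nonneg (Real.sqrt_nonneg 2) (sin_angle_nonneg u v)) two_ne_zero).1 ?_
  rw [hsq]
  rcases le_total 0 (Real.cos θ) with hc | hc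
  · calc projDist u v ^ 2 ≤ ‖u - v‖ ^ 2 :=
          pow_le_pow_left₀ (projDist_nonneg u v) (min_le_left _ _) 2
      _ = 2 - 2 * Real.cos θ := by rw [norm_sub_sq_real, hu, hv, hinner]; ring
      _ ≤ _ := by nlinarith [Real.cos_le_one θ]
  · calc projDist u v ^ 2 ≤ ‖u + v‖ ^ 2 :=
          pow_le_pow_left₀ (projDist_nonneg u v) (min_le_right _ _) 2
      _ = 2 + 2 * Real.cos θ := by rw [norm_add_sq_real, hu, hv, hinner]; ring
      _ ≤ _ := by nlinarith [Real.neg_one_le_cos θ]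

end ProjDistAngle

theorem Summable.exists_sum_Ico_lt {f : ℕ → ℝ} (hf : Summable f) {ε : ℝ} (hε : 0 < ε) :
    ∃ N, ∀ m n, N ≤ n → n ≤ m → ∑ j ∈ Finset.Ico n m, f j < ε := by
  obtain ⟨N, hN⟩ := Metric.cauchySeq_iff.1 hf.hasSum.tendsto_sum_nat.cauchySeq ε hε
  refine ⟨N, fun m n hn hnm => ?_⟩
  rw [Finset.sum_Ico_eq_sub f hnm]
  exact (le_abs_self _).trans_lt (hN m (hn.trans hnm) n hn)

/-- Cauchy estimate for the boundary map: along a bounded-step sequence one has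
`sin∠(k(n)e₁, k(m)e₁) ≤ C ∑_{j=n}^{m−1} α(j) 1/α(j) 0`; in particular, if the series of
top singular value gaps converges, the lines `[k(n)e₁]` form a Cauchy sequence. -/
theorem stmt14 (d : ℕ) (hd : 2 ≤ d) (g : ℕ → Matrix (Fin d) (Fin d) ℝ)
    (hbd : HasBoundedSteps g)
    (k : ℕ → Matrix (Fin d) (Fin d) ℝ) (α : ℕ → Fin d → ℝ)
    (k' : ℕ → Matrix (Fin d) (Fin d) ℝ)
    (hsvd : ∀ n : ℕ, IsSVD (g n) (k n) (α n) (k' n)) :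
    ∃ C : ℝ, 0 < C ∧
      (∀ n m : ℕ, n ≤ m →
        sinAngle (appE (k n) (e1 (by omega))) (appE (k m) (e1 (by omega)))
          ≤ C * ∑ j ∈ Finset.Ico n m, (α j ⟨1, by omega⟩ / α j ⟨0, by omega⟩)) ∧
      ((Summable fun j : ℕ => α j ⟨1, by omega⟩ / α j ⟨0, by omega⟩) →
        ∀ ε : ℝ, 0 < ε → ∃ N : ℕ, ∀ m n : ℕ, N ≤ n → n ≤ m →
          sinAngle (appE (k n) (e1 (by omega))) (appE (k m) (e1 (by omega))) < ε) := by
  have h1 : 1 < d := hd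
  obtain ⟨r, hr1, hr⟩ := hbd
  set u := fun j => appE (k j) (e1 (Nat.zero_lt_of_lt h1))
  have hu (j : ℕ) : ‖u j‖ = 1 := by
    rw [norm_appE_of_mem_unitary (hsvd j).left_mem_unitary, norm_e1]
  set C := √2 * r ^ 2
  have hC : 0 < C := mul_pos (by positivity) (pow_pos (zero_lt_one.trans_le hr1) 2)
  have hbound (n m : ℕ) (hnm : n ≤ m) : sinAngle (u n) (u m)
      ≤ C * ∑ j ∈ Finset.Ico n m, α j ⟨1, h1⟩ / α j ⟨0, Nat.zero_lt_of_lt h1⟩ := by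
    rw [Finset.mul_sum]
    calc sinAngle (u n) (u m) ≤ projDist (u n) (u m) := sin_angle_le_projDist (hu n) _
      _ ≤ ∑ j ∈ Finset.Ico n m, projDist (u j) (u (j + 1)) := projDist_le_sum_Ico u hnm
      _ ≤ _ := Finset.sum_le_sum fun j _ => by
        refine (projDist_le_sqrt_two_mul_sin_angle (hu j) (hu (j + 1))).trans ?_
        rw [mul_assoc]
        exact mul_le_mul_of_nonneg_left
          (sinAngle_le_of_opNorm_le h1 (hsvd j) (hsvd (j + 1)) (hr j).1 (hr j).2)
          (Real.sqrt_nonneg 2)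
  refine ⟨C, hC, hbound, fun hsum ε hε => ?_⟩
  obtain ⟨N, hN⟩ := hsum.exists_sum_Ico_lt (div_pos hε hC)
  exact ⟨N, fun m n hn hnm =>
    (hbound n m hnm).trans_lt ((lt_div_iff₀' hC).1 (hN m n hn hnm))⟩
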